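/- Residual after one restart cycle: Suppose the first-cycle data satisfy the hypotheses of the cospatial residual relation, producing R_m = U_m (Ê_m^* Ξ_m) with U_m := 𝒱_m M − V_{m+1} H_{m+1,m}. Suppose second-cycle data V_1^{(2)}, …, V_{m+1}^{(2)} ∈ ℂ^{n×s}, ℋ_m^{(2)} ∈ ℂ^{ms×ms}, H_{m+1,m}^{(2)} ∈ ℂ^{s×s}, B^{(2)} ∈ ℂ^{s×s}, M^{(2)} ∈ ℂ^{ms×s} satisfy U_m = V_1^{(2)} B^{(2)}, the block Arnoldi relation A 𝒱_m^{(2)} = 𝒱_m^{(2)} ℋ_m^{(2)} + V_{m+1}^{(2)} H_{m+1,m}^{(2)} Ê_m^*, and ℋ_m^{(2)} + M^{(2)} Ê_m^* invertible. Set Ξ^{(2)} := (ℋ_m^{(2)} + M^{(2)} Ê_m^*)^{-1} Ê_1 B^{(2)}, D_m := 𝒱_m^{(2)} Ξ^{(2)} (Ê_m^* Ξ_m), and U^{(2)} := 𝒱_m^{(2)} M^{(2)} − V_{m+1}^{(2)} H_{m+1,m}^{(2)}. Then the updated residual satisfies B − A (X_m + D_m) = U^{(2)} (Ê_m^* Ξ^{(2)})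 (Ê_m^* Ξ_m). -/
import Mathlib


open Matrix

noncomputable section

/-- Concatenation of `m` block vectors, each `n × s`, into an `n × (m·s)` matrix. -/
def blockCat {n m s : ℕ} (V : Fin m → Matrix (Fin n) (Fin s) ℂ) :
    Matrix (Fin n) (Fin m × Fin s) ℂ :=
  Matrix.of fun i p => V p.1 i p.2

/-- The `k`-th block unit vector `Ê_k = e_k ⊗ I_s ∈ ℂ^{ms × s}`. -/
def blockUnit (m s : ℕ) (k : Fin m) : Matrix (Fin m × Fin s) (Fin s) ℂ :=
  Matrix.of fun p j => if p.1 = k ∧ p.2 = j then 1 else 0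


lemma blockCat_mul_blockUnit {n m s : ℕ} (V : Fin m → Matrix (Fin n) (Fin s) ℂ) (k : Fin m) :
    blockCat V * blockUnit m s k = V k := by
  ext i j
  simp only [Matrix.mul_apply, blockCat, blockUnit, Matrix.of_apply, Fintype.sum_prod_type]
  rw [Finset.sum_eq_single k]
  · rw [Finset.sum_eq_single j] <;> simp +contextual
  · intro b _ hb; simp [hb]
  · simp

lemma cycle_residual {n m s : ℕ} (hm : 0 < m)
    (A : Matrix (Fin n) (Fin n) ℂ) (B : Matrix (Fin n) (Fin s) ℂ)
    (Em E1 : Matrix (Fin m × Fin s) (Fin s) ℂ)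
    (hE1 : E1 = blockUnit m s ⟨0, hm⟩)
    (V : Fin (m + 1) → Matrix (Fin n) (Fin s) ℂ)
    (ℋ : Matrix (Fin m × Fin s) (Fin m × Fin s) ℂ)
    (H Bhat : Matrix (Fin s) (Fin s) ℂ)
    (M : Matrix (Fin m × Fin s) (Fin s) ℂ)
    (𝒱 : Matrix (Fin n) (Fin m × Fin s) ℂ)
    (h𝒱 : 𝒱 = blockCat fun k => V k.castSucc)
    (hB : B = V 0 * Bhat)
    (harnoldi : A * 𝒱 = 𝒱 * ℋ + V (Fin.last m) * H * Emᴴ)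
    (hinv : IsUnit (ℋ + M * Emᴴ))
    (Ξ : Matrix (Fin m × Fin s) (Fin s) ℂ)
    (hΞ : Ξ = (ℋ + M * Emᴴ)⁻¹ * E1 * Bhat) :
    B - A * (𝒱 * Ξ) = (𝒱 * M - V (Fin.last m) * H) * (Emᴴ * Ξ) := by
  have hmulinv : (ℋ + M * Emᴴ) * (ℋ + M * Emᴴ)⁻¹ = 1 :=
    Matrix.mul_nonsing_inv _ ((Matrix.isUnit_iff_isUnit_det _).mp hinv)
  have hfull : (ℋ + M * Emᴴ) * Ξ = E1 * Bhat := by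
    rw [hΞ, ← Matrix.mul_assoc, ← Matrix.mul_assoc, hmulinv, Matrix.one_mul]
  have hHΞ : ℋ * Ξ = E1 * Bhat - M * (Emᴴ * Ξ) := by
    rw [Matrix.add_mul, Matrix.mul_assoc] at hfull
    exact eq_sub_of_add_eq hfull
  have h𝒱E1 : 𝒱 * E1 = V 0 := by
    rw [h𝒱, hE1, blockCat_mul_blockUnit]
    congr
  rw [hB, ← Matrix.mul_assoc A 𝒱 Ξ, harnoldi, Matrix.add_mul, Matrix.mul_assoc 𝒱 ℋ Ξ, hHΞ,
    Matrix.mul_sub, ← Matrix.mul_assoc 𝒱 E1, h𝒱E1, Matrix.sub_mul,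
    Matrix.mul_assoc 𝒱 M (Emᴴ * Ξ), Matrix.mul_assoc (V (Fin.last m) * H) Emᴴ Ξ]
  abel

/-- Residual after one restart cycle. -/
theorem restarted_residual
    {n m s : ℕ} (hn : 0 < n) (hm : 0 < m) (hs : 0 < s)
    (A : Matrix (Fin n) (Fin n) ℂ) (B : Matrix (Fin n) (Fin s) ℂ)
    (Em E1 : Matrix (Fin m × Fin s) (Fin s) ℂ)
    (hEm : Em = blockUnit m s ⟨m - 1, by omega⟩)
    (hE1 : E1 = blockUnit m s ⟨0, hm⟩)
    -- first-cycle data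
    (V : Fin (m + 1) → Matrix (Fin n) (Fin s) ℂ)
    (ℋ : Matrix (Fin m × Fin s) (Fin m × Fin s) ℂ)
    (H Bhat : Matrix (Fin s) (Fin s) ℂ)
    (M : Matrix (Fin m × Fin s) (Fin s) ℂ)
    (𝒱 : Matrix (Fin n) (Fin m × Fin s) ℂ)
    (h𝒱 : 𝒱 = blockCat fun k => V k.castSucc)
    (hB : B = V 0 * Bhat)
    (harnoldi : A * 𝒱 = 𝒱 * ℋ + V (Fin.last m) * H * Emᴴ)
    (hinv : IsUnit (ℋ + M * Emᴴ))
    (Ξ : Matrix (Fin m × Fin s) (Fin s) ℂ)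
    (hΞ : Ξ = (ℋ + M * Emᴴ)⁻¹ * E1 * Bhat)
    (X U : Matrix (Fin n) (Fin s) ℂ)
    (hX : X = 𝒱 * Ξ)
    (hU : U = 𝒱 * M - V (Fin.last m) * H)
    -- second-cycle data
    (V₂ : Fin (m + 1) → Matrix (Fin n) (Fin s) ℂ)
    (ℋ₂ : Matrix (Fin m × Fin s) (Fin m × Fin s) ℂ)
    (H₂ B₂ : Matrix (Fin s) (Fin s) ℂ)
    (M₂ : Matrix (Fin m × Fin s) (Fin s) ℂ)
    (𝒱₂ : Matrix (Fin n) (Fin m × Fin s) ℂ)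
    (h𝒱₂ : 𝒱₂ = blockCat fun k => V₂ k.castSucc)
    (hU₁ : U = V₂ 0 * B₂)
    (harnoldi₂ : A * 𝒱₂ = 𝒱₂ * ℋ₂ + V₂ (Fin.last m) * H₂ * Emᴴ)
    (hinv₂ : IsUnit (ℋ₂ + M₂ * Emᴴ))
    (Ξ₂ : Matrix (Fin m × Fin s) (Fin s) ℂ)
    (hΞ₂ : Ξ₂ = (ℋ₂ + M₂ * Emᴴ)⁻¹ * E1 * B₂)
    (D U₂ : Matrix (Fin n) (Fin s) ℂ)
    (hD : D = 𝒱₂ * Ξ₂ * (Emᴴ * Ξ))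
    (hU₂ : U₂ = 𝒱₂ * M₂ - V₂ (Fin.last m) * H₂) :
    B - A * (X + D) = U₂ * (Emᴴ * Ξ₂) * (Emᴴ * Ξ) := by
  have h1 := cycle_residual hm A B Em E1 hE1 V ℋ H Bhat M 𝒱 h𝒱 hB harnoldi hinv Ξ hΞ
  have h2 := cycle_residual hm A U Em E1 hE1 V₂ ℋ₂ H₂ B₂ M₂ 𝒱₂ h𝒱₂ hU₁ harnoldi₂ hinv₂ Ξ₂ hΞ₂
  rw [← hU] at h1
  rw [← hU₂] at h2
  calc B - A * (X + D)
      = (B - A * (𝒱 * Ξ)) - A * (𝒱₂ * Ξ₂) * (Emᴴ * Ξ) := by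
        rw [hX, hD, Matrix.mul_add, Matrix.mul_assoc A (𝒱₂ * Ξ₂), ← Matrix.mul_assoc A (𝒱₂ * Ξ₂)]
        abel
    _ = (U - A * (𝒱₂ * Ξ₂)) * (Emᴴ * Ξ) := by rw [h1, Matrix.sub_mul]
    _ = U₂ * (Emᴴ * Ξ₂) * (Emᴴ * Ξ) := by rw [h2]
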